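/- arXiv:1209.4095 — 2 statements merged into one kernel-verified Lean document; each statement's English description precedes it below -/
import Mathlib

section
/- Let B be an n×n exchange matrix and let R be one of ℤ, ℚ, ℝ. Suppose (b_i : i ∈ I) is an R-independent set for B with the following property: for every B-cone C, the set of nonnegative R-linear combinations of {b_i : i ∈ I} ∩ C contains R^n ∩ C. Then (b_i : i ∈ I) is a positive R-basis for B. -/
open scoped BigOperators

namespace MutationFanPaper

/-- An exchange matrix: a skew-symmetrizable `n × n` integer matrix. -/
def IsExchangeMatrix {n : ℕ} (B : Matrix (Fin n) (Fin n) ℤ) : Prop :=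
  ∃ d : Fin n → ℤ, (∀ i, 0 < d i) ∧ ∀ i j, d i * B i j = -(d j * B j i)

/-- Matrix mutation in direction `k`. -/
def mutate {n : ℕ} (B : Matrix (Fin n) (Fin n) ℤ) (k : Fin n) : Matrix (Fin n) (Fin n) ℤ :=
  fun i j =>
    if i = k ∨ j = k then -B i j
    else B i j + Int.sign (B k j) * max (B i k * B k j) 0

/-- The mutation map `η_k^B : ℝⁿ → ℝⁿ`. -/
noncomputable def etaStep {n : ℕ} (B : Matrix (Fin n) (Fin n) ℤ) (k : Fin n) (a : Fin n → ℝ) : Fin n → ℝ :=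
  fun j =>
    if j = k then -a k
    else if 0 ≤ a k ∧ 0 ≤ B k j then a j + a k * (B k j : ℝ)
    else if a k ≤ 0 ∧ B k j ≤ 0 then a j - a k * (B k j : ℝ)
    else a j

/-- `etaSeq B κ` is the mutation map `η_κ^B`, where the list `κ` records the indices in
order of application (the head of the list is applied first, using the matrix `B` itself). -/
noncomputable def etaSeq {n : ℕ} (B : Matrix (Fin n) (Fin n) ℤ) : List (Fin n) → (Fin n → ℝ) → Fin n → ℝ
  | [], a => a
  | k :: κ, a => etaSeq (mutate B k) κ (etaStep B k a)

/-- Iterated matrix mutation along a list of indices; the head is applied first. -/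
def mutateSeq {n : ℕ} (B : Matrix (Fin n) (Fin n) ℤ) : List (Fin n) → Matrix (Fin n) (Fin n) ℤ
  | [] => B
  | k :: κ => mutateSeq (mutate B k) κ

/-- The copy of ℤ inside ℝ, as a subring. -/
def intSR : Subring ℝ := (Int.castRingHom ℝ).range

/-- The copy of ℚ inside ℝ, as a subring. -/
noncomputable def ratSR : Subring ℝ := (Rat.castHom ℝ).range

/-- The formal expression `Σ_{i ∈ S} c i • v i` is a `B`-coherent linear relation. -/
def IsBCoherentRel {n : ℕ} (B : Matrix (Fin n) (Fin n) ℤ) {ι : Type*} (S : Finset ι)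
    (v : ι → Fin n → ℝ) (c : ι → ℝ) : Prop :=
  ∀ κ : List (Fin n),
    (∑ i ∈ S, c i • etaSeq B κ (v i)) = 0 ∧
    (∑ i ∈ S, c i • (fun j => min (etaSeq B κ (v i) j) 0)) = 0

/-- The formal expression `a - Σ_{i ∈ S} c i • v i` is a `B`-coherent linear relation. -/
def IsBCoherentDiff {n : ℕ} (B : Matrix (Fin n) (Fin n) ℤ) (a : Fin n → ℝ) {ι : Type*}
    (S : Finset ι) (v : ι → Fin n → ℝ) (c : ι → ℝ) : Prop :=
  ∀ κ : List (Fin n),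
    (etaSeq B κ a - ∑ i ∈ S, c i • etaSeq B κ (v i)) = 0 ∧
    ((fun j => min (etaSeq B κ a j) 0) -
      ∑ i ∈ S, c i • (fun j => min (etaSeq B κ (v i) j) 0)) = 0

/-- The family `b` is an `R`-spanning set for `B` (a family of vectors in `Rⁿ` such that every
`a ∈ Rⁿ` admits a `B`-coherent relation `a - Σ_{i ∈ S} c i • b i` with coefficients in `R`). -/
def SpanningOver {n : ℕ} (R : Subring ℝ) (B : Matrix (Fin n) (Fin n) ℤ) {ι : Type*}
    (b : ι → Fin n → ℝ) : Prop :=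
  (∀ i j, b i j ∈ R) ∧
  ∀ a : Fin n → ℝ, (∀ j, a j ∈ R) →
    ∃ (S : Finset ι) (c : ι → ℝ), (∀ i ∈ S, c i ∈ R) ∧ IsBCoherentDiff B a S b c

/-- The family `b` is an `R`-independent set for `B`. -/
def IndependentOver {n : ℕ} (R : Subring ℝ) (B : Matrix (Fin n) (Fin n) ℤ) {ι : Type*}
    (b : ι → Fin n → ℝ) : Prop :=
  (∀ i j, b i j ∈ R) ∧
  ∀ (S : Finset ι) (c : ι → ℝ), (∀ i ∈ S, c i ∈ R) → IsBCoherentRel B S b c →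
    ∀ i ∈ S, c i = 0

/-- The family `b` is an `R`-basis for `B`. -/
def BasisOver {n : ℕ} (R : Subring ℝ) (B : Matrix (Fin n) (Fin n) ℤ) {ι : Type*}
    (b : ι → Fin n → ℝ) : Prop :=
  SpanningOver R B b ∧ IndependentOver R B b

/-- The family `b` is a positive `R`-basis for `B`. -/
def PositiveBasisOver {n : ℕ} (R : Subring ℝ) (B : Matrix (Fin n) (Fin n) ℤ) {ι : Type*}
    (b : ι → Fin n → ℝ) : Prop :=
  BasisOver R B b ∧
  ∀ a : Fin n → ℝ, (∀ j, a j ∈ R) →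
    ∃ (S : Finset ι) (c : ι → ℝ), (∀ i ∈ S, c i ∈ R ∧ 0 ≤ c i) ∧ IsBCoherentDiff B a S b c

/-- The relation `a ≡^B a'`: all mutation maps give componentwise equal signs. -/
def eqB {n : ℕ} (B : Matrix (Fin n) (Fin n) ℤ) (a a' : Fin n → ℝ) : Prop :=
  ∀ (κ : List (Fin n)) (j : Fin n),
    Real.sign (etaSeq B κ a j) = Real.sign (etaSeq B κ a' j)

/-- A `B`-class: an equivalence class of `≡^B`. -/
def IsBClass {n : ℕ} (B : Matrix (Fin n) (Fin n) ℤ) (C : Set (Fin n → ℝ)) : Prop :=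
  ∃ a, C = {a' | eqB B a a'}

/-- A `B`-cone: the closure of a `B`-class. -/
def IsBCone {n : ℕ} (B : Matrix (Fin n) (Fin n) ℤ) (C : Set (Fin n → ℝ)) : Prop :=
  ∃ D, IsBClass B D ∧ C = closure D

/-- A convex cone: a set closed under addition and positive scaling. -/
def IsConvexCone {n : ℕ} (C : Set (Fin n → ℝ)) : Prop :=
  (∀ x ∈ C, ∀ y ∈ C, x + y ∈ C) ∧ ∀ x ∈ C, ∀ r : ℝ, 0 < r → r • x ∈ C

/-- `F` is a face of the convex cone `C`: a convex subset such that any line segment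
contained in `C` whose interior meets `F` lies entirely in `F`. -/
def IsFaceOf {n : ℕ} (C F : Set (Fin n → ℝ)) : Prop :=
  F ⊆ C ∧ Convex ℝ F ∧
    ∀ x y : Fin n → ℝ, segment ℝ x y ⊆ C → (openSegment ℝ x y ∩ F).Nonempty →
      segment ℝ x y ⊆ F

/-- The mutation fan `ℱ_B`: all `B`-cones and all faces of `B`-cones. -/
def MutFan {n : ℕ} (B : Matrix (Fin n) (Fin n) ℤ) : Set (Set (Fin n → ℝ)) :=
  {C | IsBCone B C ∨ ∃ D, IsBCone B D ∧ IsFaceOf D C}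

/-- A fan: a collection of closed convex cones, closed under taking faces, in which the
intersection of any two cones is a face of each. -/
def IsFan {n : ℕ} (F : Set (Set (Fin n → ℝ))) : Prop :=
  (∀ C ∈ F, IsClosed C ∧ IsConvexCone C) ∧
  (∀ C ∈ F, ∀ G, IsFaceOf C G → G ∈ F) ∧
  ∀ C ∈ F, ∀ D ∈ F, IsFaceOf C (C ∩ D) ∧ IsFaceOf D (C ∩ D)

/-- A set of vectors is sign-coherent if no two of its members have strictly opposite
signs in any coordinate. -/
def SignCoherentSet {n : ℕ} (S : Set (Fin n → ℝ)) : Prop :=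
  ∀ x ∈ S, ∀ y ∈ S, ∀ j, ¬(x j < 0 ∧ 0 < y j)

/-- The ray spanned by a vector `v`. -/
def rayOf {n : ℕ} (v : Fin n → ℝ) : Set (Fin n → ℝ) :=
  {x | ∃ t : ℝ, 0 ≤ t ∧ x = t • v}

/-- `C` is a ray of the fan `F`: a one-dimensional cone belonging to `F`. -/
def IsRayOf {n : ℕ} (F : Set (Set (Fin n → ℝ))) (C : Set (Fin n → ℝ)) : Prop :=
  C ∈ F ∧ ∃ v : Fin n → ℝ, v ≠ 0 ∧ C = rayOf v

/-- A simplicial cone: the nonnegative span of finitely many linearly independent vectors. -/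
def IsSimplicialCone {n : ℕ} (C : Set (Fin n → ℝ)) : Prop :=
  ∃ (k : ℕ) (v : Fin k → Fin n → ℝ), LinearIndependent ℝ v ∧
    C = {x | ∃ c : Fin k → ℝ, (∀ i, 0 ≤ c i) ∧ x = ∑ i, c i • v i}

/-- A rational cone: the nonnegative span of finitely many rational vectors. -/
def IsRationalCone {n : ℕ} (C : Set (Fin n → ℝ)) : Prop :=
  ∃ (k : ℕ) (v : Fin k → Fin n → ℝ), (∀ i j, ∃ q : ℚ, v i j = (q : ℝ)) ∧
    C = {x | ∃ c : Fin k → ℝ, (∀ i, 0 ≤ c i) ∧ x = ∑ i, c i • v i}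

/-- `F'` is the rational part of the fan `F`. -/
def IsRationalPart {n : ℕ} (F F' : Set (Set (Fin n → ℝ))) : Prop :=
  IsFan F' ∧ (∀ C ∈ F', IsRationalCone C) ∧
  (∀ C ∈ F', ∃ D ∈ F, C ⊆ D) ∧
  ∀ C ∈ F, ∃ D ∈ F', D ⊆ C ∧ (∀ D' ∈ F', D' ⊆ C → D' ⊆ D) ∧
    ∀ x ∈ C, (∀ j, ∃ q : ℚ, x j = (q : ℝ)) → x ∈ D

/-- `v` is the smallest nonzero integer vector in the cone `C`. -/
def IsSmallestIntVec {n : ℕ} (C : Set (Fin n → ℝ)) (v : Fin n → ℝ) : Prop :=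
  v ∈ C ∧ v ≠ 0 ∧ (∀ j, ∃ m : ℤ, v j = (m : ℝ)) ∧
    ∀ w ∈ C, w ≠ 0 → (∀ j, ∃ m : ℤ, w j = (m : ℝ)) → ‖v‖ ≤ ‖w‖

end MutationFanPaper

/-!
Each mutation map `η_k^B` is linear on the two half-spaces `a k ≥ 0` and `a k ≤ 0`. So if, for
every `κ`, each `η_κ^B (v i)` lies weakly on the same side of every coordinate hyperplane as
`η_κ^B a`, where `a = Σ c i • v i`, then `η_κ^B` and `min (η_κ^B ·) 0` commute with the sum: the
relation is `B`-coherent. This sign-compatibility with `a` is a closed condition that holds on the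
`B`-class of `a`, hence on its closure, the `B`-cone of `a`; so the nonnegative expansion of `a` in
the members of `b` lying in that cone is a positive `B`-coherent expansion.
-/

theorem Real.sign_nonneg_iff {r : ℝ} : 0 ≤ Real.sign r ↔ 0 ≤ r := by
  rcases lt_trichotomy r 0 with h | rfl | h
  · simp [Real.sign_of_neg h, h.not_ge]
  · simp
  · simp [Real.sign_of_pos h, h.le]

theorem Real.sign_nonpos_iff {r : ℝ} : Real.sign r ≤ 0 ↔ r ≤ 0 := by
  simpa [Real.sign_neg] using Real.sign_nonneg_iff (r := -r)

namespace MutationFanPaper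

section

variable {n : ℕ}

/-- For `s = ±1`, this agrees with `η_k^B` on the half-space `0 ≤ s * a k`. -/
def etaStepLinear (B : Matrix (Fin n) (Fin n) ℤ) (k : Fin n) (s : ℝ) :
    (Fin n → ℝ) →ₗ[ℝ] Fin n → ℝ :=
  LinearMap.pi fun j => if j = k then -LinearMap.proj k
    else LinearMap.proj j + max (s * B k j) 0 • LinearMap.proj k

theorem etaStep_eq_etaStepLinear (B : Matrix (Fin n) (Fin n) ℤ) (k : Fin n) {s : ℝ}
    (hs : s = 1 ∨ s = -1) {a : Fin n → ℝ} (ha : 0 ≤ s * a k) :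
    etaStep B k a = etaStepLinear B k s a := by
  funext j
  by_cases hj : j = k
  · simp [etaStep, etaStepLinear, hj]
  simp only [etaStep, etaStepLinear, hj, if_false, LinearMap.pi_apply, LinearMap.add_apply,
    LinearMap.smul_apply, LinearMap.proj_apply, smul_eq_mul]
  rcases hs with rfl | rfl <;> rcases le_or_gt 0 (B k j) with hB | hB <;>
    simp only [one_mul, neg_one_mul, neg_nonneg] at ha
  · simp [ha, hB, mul_comm]
  · simp only [hB.not_ge, ha, true_and, if_false]
    split_ifs with hak
    · simp [le_antisymm hak.1 ha]
    · simp [hB.le]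
  · simp only [ha, and_true, hB, true_and]
    split_ifs with hak hBk
    · simp [le_antisymm ha hak]
    · simp [le_antisymm hBk hB]
    · simp [hB]
  · simp [ha, hB.le, hB.not_ge]
    ring

theorem continuous_etaStep (B : Matrix (Fin n) (Fin n) ℤ) (k : Fin n) :
    Continuous (etaStep B k) := by
  have hpos {a : Fin n → ℝ} (ha : 0 ≤ a k) : etaStep B k a = etaStepLinear B k 1 a :=
    etaStep_eq_etaStepLinear B k (.inl rfl) (by rwa [one_mul])
  have hneg {a : Fin n → ℝ} (ha : a k ≤ 0) : etaStep B k a = etaStepLinear B k (-1) a :=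
    etaStep_eq_etaStepLinear B k (.inr rfl) (by rwa [neg_one_mul, neg_nonneg])
  have h : etaStep B k =
      fun a => if 0 ≤ a k then etaStepLinear B k 1 a else etaStepLinear B k (-1) a := by
    funext a
    split_ifs with ha
    exacts [hpos ha, hneg (le_of_not_ge ha)]
  rw [h]
  exact Continuous.if_le (LinearMap.continuous_of_finiteDimensional _)
    (LinearMap.continuous_of_finiteDimensional _) continuous_const (continuous_apply k)
    fun a ha => by rw [← hpos ha.le, ← hneg ha.ge]

theorem continuous_etaSeq (B : Matrix (Fin n) (Fin n) ℤ) (κ : List (Fin n)) :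
    Continuous (etaSeq B κ) := by
  induction κ generalizing B with
  | nil => exact continuous_id
  | cons k κ ih => exact (ih (mutate B k)).comp (continuous_etaStep B k)

def SignCompatible (B : Matrix (Fin n) (Fin n) ℤ) (a x : Fin n → ℝ) : Prop :=
  ∀ (κ : List (Fin n)) (j : Fin n),
    (0 ≤ etaSeq B κ a j → 0 ≤ etaSeq B κ x j) ∧ (etaSeq B κ a j ≤ 0 → etaSeq B κ x j ≤ 0)

theorem signCompatible_of_eqB {B : Matrix (Fin n) (Fin n) ℤ} {a x : Fin n → ℝ}
    (h : eqB B a x) : SignCompatible B a x := fun κ j =>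
  ⟨fun ha => Real.sign_nonneg_iff.1 (h κ j ▸ Real.sign_nonneg_iff.2 ha),
    fun ha => Real.sign_nonpos_iff.1 (h κ j ▸ Real.sign_nonpos_iff.2 ha)⟩

theorem isClosed_setOf_signCompatible (B : Matrix (Fin n) (Fin n) ℤ) (a : Fin n → ℝ) :
    IsClosed {x | SignCompatible B a x} := by
  simp only [SignCompatible, Set.ofPred_forall, Set.ofPred_and]
  refine isClosed_iInter fun κ => isClosed_iInter fun j => ?_
  have hcont : Continuous fun x => etaSeq B κ x j :=
    (continuous_apply j).comp (continuous_etaSeq B κ)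
  exact (isClosed_iInter fun _ => isClosed_le continuous_const hcont).inter
    (isClosed_iInter fun _ => isClosed_le hcont continuous_const)

theorem signCompatible_of_mem_closure {B : Matrix (Fin n) (Fin n) ℤ} {a x : Fin n → ℝ}
    (hx : x ∈ closure {x | eqB B a x}) : SignCompatible B a x :=
  closure_minimal (fun _ => signCompatible_of_eqB) (isClosed_setOf_signCompatible B a) hx

section Additivity

variable {B : Matrix (Fin n) (Fin n) ℤ} {ι : Type*} {S : Finset ι} {c : ι → ℝ}
  {v : ι → Fin n → ℝ} {a : Fin n → ℝ}

theorem etaStep_eq_sum {k : Fin n} (ha : a = ∑ i ∈ S, c i • v i)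
    (hv : ∀ i ∈ S, (0 ≤ a k → 0 ≤ v i k) ∧ (a k ≤ 0 → v i k ≤ 0)) :
    etaStep B k a = ∑ i ∈ S, c i • etaStep B k (v i) := by
  obtain ⟨s, hs, has, hvs⟩ :
      ∃ s : ℝ, (s = 1 ∨ s = -1) ∧ 0 ≤ s * a k ∧ ∀ i ∈ S, 0 ≤ s * v i k := by
    rcases le_total 0 (a k) with h | h
    · exact ⟨1, .inl rfl, by simpa using h, fun i hi => by simpa using (hv i hi).1 h⟩
    · exact ⟨-1, .inr rfl, by simpa using h, fun i hi => by simpa using (hv i hi).2 h⟩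
  rw [etaStep_eq_etaStepLinear B k hs has, ha, map_sum]
  exact Finset.sum_congr rfl fun i hi => by
    rw [map_smul, etaStep_eq_etaStepLinear B k hs (hvs i hi)]

theorem etaSeq_eq_sum (κ : List (Fin n)) (ha : a = ∑ i ∈ S, c i • v i)
    (hv : ∀ i ∈ S, SignCompatible B a (v i)) :
    etaSeq B κ a = ∑ i ∈ S, c i • etaSeq B κ (v i) := by
  induction κ generalizing B a v with
  | nil => exact ha
  | cons k κ ih =>
    exact ih (etaStep_eq_sum ha fun i hi => hv i hi [] k) fun i hi κ' j => hv i hi (k :: κ') j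

theorem isBCoherentDiff_of_signCompatible (ha : a = ∑ i ∈ S, c i • v i)
    (hv : ∀ i ∈ S, SignCompatible B a (v i)) : IsBCoherentDiff B a S v c := by
  intro κ
  have hsum := etaSeq_eq_sum κ ha hv
  refine ⟨sub_eq_zero.2 hsum, sub_eq_zero.2 ?_⟩
  funext j
  simp only [Finset.sum_apply, Pi.smul_apply, smul_eq_mul]
  rcases le_total 0 (etaSeq B κ a j) with h | h
  · rw [min_eq_right h, Finset.sum_eq_zero fun i hi => by
      rw [min_eq_right ((hv i hi κ j).1 h), mul_zero]]
  · rw [min_eq_left h, Finset.sum_congr rfl fun i hi => by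
      rw [min_eq_left ((hv i hi κ j).2 h)], hsum, Finset.sum_apply]
    simp only [Pi.smul_apply, smul_eq_mul]

end Additivity

theorem positiveBasisOver_of_independentOver {R : Subring ℝ} {B : Matrix (Fin n) (Fin n) ℤ}
    {ι : Type*} {b : ι → Fin n → ℝ} (hind : IndependentOver R B b)
    (hpos : ∀ a : Fin n → ℝ, (∀ j, a j ∈ R) → ∃ (S : Finset ι) (c : ι → ℝ),
      (∀ i ∈ S, c i ∈ R ∧ 0 ≤ c i) ∧ IsBCoherentDiff B a S b c) :
    PositiveBasisOver R B b := by
  refine ⟨⟨⟨hind.1, fun a haR => ?_⟩, hind⟩, hpos⟩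
  obtain ⟨S, c, hc, hdiff⟩ := hpos a haR
  exact ⟨S, c, fun i hi => (hc i hi).1, hdiff⟩

end

theorem positiveBasisOver_of_independent_of_span_cones_general {n : ℕ}
    (B : Matrix (Fin n) (Fin n) ℤ) (R : Subring ℝ)
    {I : Type} (b : I → Fin n → ℝ) (hind : IndependentOver R B b)
    (hspan : ∀ C : Set (Fin n → ℝ), IsBCone B C →
      ∀ a : Fin n → ℝ, (∀ j, a j ∈ R) → a ∈ C →
        ∃ (S : Finset I) (c : I → ℝ), (∀ i ∈ S, b i ∈ C) ∧
          (∀ i ∈ S, c i ∈ R ∧ 0 ≤ c i) ∧ a = ∑ i ∈ S, c i • b i) :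
    PositiveBasisOver R B b := by
  refine positiveBasisOver_of_independentOver hind fun a haR => ?_
  obtain ⟨S, c, hbC, hc, ha⟩ :=
    hspan _ ⟨_, ⟨a, rfl⟩, rfl⟩ a haR (subset_closure fun _ _ => rfl)
  exact ⟨S, c, hc, isBCoherentDiff_of_signCompatible ha fun i hi =>
    signCompatible_of_mem_closure (hbC i hi)⟩

/-- If `b` is an `R`-independent set for `B` such that for every `B`-cone
`C` the nonnegative `R`-linear span of the members of the family lying in `C` contains
`Rⁿ ∩ C`, then `b` is a positive `R`-basis for `B`. -/
theorem positiveBasisOver_of_independent_of_span_cones {n : ℕ} (hn : 1 ≤ n)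
    (B : Matrix (Fin n) (Fin n) ℤ) (hB : IsExchangeMatrix B) (R : Subring ℝ)
    (hR : R = intSR ∨ R = ratSR ∨ R = (⊤ : Subring ℝ))
    {I : Type} (b : I → Fin n → ℝ) (hind : IndependentOver R B b)
    (hspan : ∀ C : Set (Fin n → ℝ), IsBCone B C →
      ∀ a : Fin n → ℝ, (∀ j, a j ∈ R) → a ∈ C →
        ∃ (S : Finset I) (c : I → ℝ), (∀ i ∈ S, b i ∈ C) ∧
          (∀ i ∈ S, c i ∈ R ∧ 0 ≤ c i) ∧ a = ∑ i ∈ S, c i • b i) :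
    PositiveBasisOver R B b :=
  positiveBasisOver_of_independent_of_span_cones_general B R b hind hspan

end MutationFanPaper
end

section
/- Let B be an n×n exchange matrix, let R be one of ℤ, ℚ, ℝ, and let Σ_{i∈S} c_i·v_i be a B-coherent linear relation with coefficients in R. Suppose that for some finite sequence κ of indices in [n], some index j ∈ [n], and some λ ∈ S, the j-th coordinate of η_κ^B(v_λ) is strictly positive while the j-th coordinate of η_κ^B(v_i) is nonpositive for every i ∈ S with i ≠ λ. Then c_λ = 0. -/
open scoped BigOperators

namespace MutationFanPaper

theorem sum_mul_max_zero_eq_zero {ι : Type*} {S : Finset ι} {c x : ι → ℝ}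
    (hsum : ∑ i ∈ S, c i * x i = 0) (hmin : ∑ i ∈ S, c i * min (x i) 0 = 0) :
    ∑ i ∈ S, c i * max (x i) 0 = 0 := by
  have hmax : ∀ i, max (x i) 0 = x i - min (x i) 0 := fun i => by
    linarith [min_add_max (x i) 0]
  simp only [hmax, mul_sub, Finset.sum_sub_distrib, hsum, hmin, sub_zero]

theorem coeff_eq_zero_of_sum_mul_max_zero_eq_zero {ι : Type*} {S : Finset ι} {c x : ι → ℝ}
    (h : ∑ i ∈ S, c i * max (x i) 0 = 0) {lam : ι} (hlam : lam ∈ S) (hpos : 0 < x lam)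
    (hneg : ∀ i ∈ S, i ≠ lam → x i ≤ 0) :
    c lam = 0 := by
  rw [Finset.sum_eq_single_of_mem lam hlam fun i hi hne => by
    rw [max_eq_right (hneg i hi hne), mul_zero], max_eq_left hpos.le] at h
  exact (mul_eq_zero.mp h).resolve_right hpos.ne'

theorem IsBCoherentRel.sum_mul_apply_eq_zero {n : ℕ} {B : Matrix (Fin n) (Fin n) ℤ}
    {ι : Type*} {S : Finset ι} {v : ι → Fin n → ℝ} {c : ι → ℝ} (hrel : IsBCoherentRel B S v c)
    (κ : List (Fin n)) (j : Fin n) :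
    ∑ i ∈ S, c i * etaSeq B κ (v i) j = 0 ∧
      ∑ i ∈ S, c i * min (etaSeq B κ (v i) j) 0 = 0 := by
  obtain ⟨hsum, hmin⟩ := hrel κ
  have hsum_j := congrFun hsum j
  have hmin_j := congrFun hmin j
  simp only [Finset.sum_apply, Pi.smul_apply, Pi.zero_apply, smul_eq_mul] at hsum_j hmin_j
  exact ⟨hsum_j, hmin_j⟩

theorem coeff_eq_zero_of_strict_sign_general {n : ℕ}
    (B : Matrix (Fin n) (Fin n) ℤ)
    {ι : Type} (S : Finset ι) (v : ι → Fin n → ℝ) (c : ι → ℝ)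
    (hrel : IsBCoherentRel B S v c)
    (κ : List (Fin n)) (j : Fin n) (lam : ι) (hlam : lam ∈ S)
    (hpos : 0 < etaSeq B κ (v lam) j)
    (hneg : ∀ i ∈ S, i ≠ lam → etaSeq B κ (v i) j ≤ 0) :
    c lam = 0 :=
  let ⟨hsum, hmin⟩ := IsBCoherentRel.sum_mul_apply_eq_zero hrel κ j
  coeff_eq_zero_of_sum_mul_max_zero_eq_zero (sum_mul_max_zero_eq_zero hsum hmin) hlam hpos hneg

/-- If `Σ_{i∈S} c i • v i` is a `B`-coherent linear relation with
coefficients in `R` (one of ℤ, ℚ, ℝ) and for some sequence `κ`, coordinate `j`, and index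
`lam ∈ S` the `j`-th coordinate of `η_κ^B(v lam)` is strictly positive while the `j`-th
coordinate of `η_κ^B(v i)` is nonpositive for every other `i ∈ S`, then `c lam = 0`. -/
theorem coeff_eq_zero_of_strict_sign {n : ℕ} (hn : 1 ≤ n)
    (B : Matrix (Fin n) (Fin n) ℤ) (hB : IsExchangeMatrix B) (R : Subring ℝ)
    (hR : R = intSR ∨ R = ratSR ∨ R = (⊤ : Subring ℝ))
    {ι : Type} (S : Finset ι) (v : ι → Fin n → ℝ) (c : ι → ℝ)
    (hc : ∀ i ∈ S, c i ∈ R) (hrel : IsBCoherentRel B S v c)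
    (κ : List (Fin n)) (j : Fin n) (lam : ι) (hlam : lam ∈ S)
    (hpos : 0 < etaSeq B κ (v lam) j)
    (hneg : ∀ i ∈ S, i ≠ lam → etaSeq B κ (v i) j ≤ 0) :
    c lam = 0 :=
  coeff_eq_zero_of_strict_sign_general B S v c hrel κ j lam hlam hpos hneg

end MutationFanPaper
end
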